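/- The coefficient of t^{n-1-m} in the polynomial part P_A(t) equals (-1)^m / ((n-1-m)! * a_1 ⋯ a_n) times the coefficient of z^m in the product B(a_1 z) ⋯ B(a_n z), where B(z) = z/(e^z - 1). -/

import Mathlib

open PowerSeries

/-- The restricted partition function. -/
noncomputable def restrictedPartition (n : ℕ) (a : Fin n → ℕ) (t : ℕ) : ℕ :=
  Nat.card {m : Fin n → ℕ // ∑ i, m i * a i = t}

/-- The Bernoulli exponential generating function `B(z) = z/(e^z - 1)` over `ℂ`. -/
noncomputable def bernoulliPS : PowerSeries ℂ :=
  PowerSeries.mk fun k => (bernoulli k : ℂ) / k.factorial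

/-!
Substitute `X = e^{-z}` in `∑ₜ p_A(t) Xᵗ = ∏ᵢ (1 - X^{aᵢ})⁻¹`. Since `1 - e^{-az} = a z / B(-a z)`,
the right side becomes `B(-a₁z) ⋯ B(-aₙz) / (a₁ ⋯ aₙ zⁿ)`. On the left, each `P_μ(t) μᵗ` with
`μ ≠ 1` sums to a rational function of `X` without pole at `X = 1`, i.e. a power series in `z`,
while `∑ₜ t^N e^{-tz} = N!/z^{N+1} + O(1)`; so the principal part at `z = 0` is
`∑_N N! [t^N]P₁ / z^{N+1}`, and comparing the coefficients of `z^{m-n}` gives the formula.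

To stay inside power series, denominators are cleared before substituting: the decomposition becomes
a polynomial identity in `X`, and the Laurent expansion of `∑ₜ t^N Xᵗ = Ω_N / (1 - X)^{N+1}` at
`X = e^{-z}` is encoded as `X^{N+1} ∣ B(-z)^{N+1} Ω_N(e^{-z}) - N!`.
-/

open scoped Polynomial Nat

namespace RestrictedPartition

theorem derivative_rescale {R : Type*} [CommRing R] (c : R) (f : R⟦X⟧) :
    d⁄dX R (rescale c f) = C c * rescale c (d⁄dX R f) := by
  ext n
  simp only [coeff_derivative, coeff_rescale, coeff_C_mul, pow_succ]
  ring

section Exponential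

variable (A : Type*) [CommRing A] [Algebra ℚ A]

noncomputable def expNeg : A⟦X⟧ := rescale (-1) (exp A)

noncomputable def bernoulliNeg : A⟦X⟧ := rescale (-1) (bernoulliPowerSeries A)

variable {A}

theorem constantCoeff_expNeg : constantCoeff (expNeg A) = 1 := by
  simp [expNeg, ← coeff_zero_eq_constantCoeff, coeff_rescale]

theorem bernoulliNeg_mul_one_sub_expNeg : bernoulliNeg A * (1 - expNeg A) = X := by
  have h := congrArg (rescale (-1 : A)) (bernoulliPowerSeries_mul_exp_sub_one A)
  rw [map_mul, map_sub, map_one, rescale_X] at h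
  rw [bernoulliNeg, expNeg, ← neg_sub, mul_neg, h, map_neg, map_one, neg_one_mul, neg_neg]

theorem derivative_expNeg : d⁄dX A (expNeg A) = -expNeg A := by
  rw [expNeg, derivative_rescale, derivative_exp, map_neg, map_one, neg_one_mul]

theorem X_mul_derivative_bernoulliNeg :
    X * d⁄dX A (bernoulliNeg A) = bernoulliNeg A - bernoulliNeg A ^ 2 * expNeg A := by
  have h := congrArg (d⁄dX A) (bernoulliNeg_mul_one_sub_expNeg (A := A))
  rw [Derivation.leibniz, map_sub, derivative_expNeg, derivative_X, Derivation.map_one_eq_zero,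
    smul_eq_mul, smul_eq_mul] at h
  linear_combination bernoulliNeg A * h -
    d⁄dX A (bernoulliNeg A) * bernoulliNeg_mul_one_sub_expNeg (A := A)

theorem expNeg_pow (k : ℕ) : expNeg A ^ k = rescale (k : A) (expNeg A) := by
  rw [expNeg, ← map_pow, exp_pow_eq_rescale_exp, rescale_rescale, rescale_rescale, mul_comm]

theorem one_sub_expNeg_pow_mul_rescale_bernoulliNeg (k : ℕ) :
    (1 - expNeg A ^ k) * rescale (k : A) (bernoulliNeg A) = C (k : A) * X := by
  rw [expNeg_pow, ← map_one (rescale (k : A)), ← map_sub, ← map_mul, mul_comm,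
    bernoulliNeg_mul_one_sub_expNeg, rescale_X]

end Exponential

section PowerSums

variable (R : Type*) [CommRing R]

/-- The recursion is `Ω_{N+1} = (1 - X)^{N+2} · X d/dX (Ω_N / (1 - X)^{N+1})`. -/
noncomputable def powSumNumerator : ℕ → R[X]
  | 0 => 1
  | N + 1 => Polynomial.X * ((1 - Polynomial.X) * Polynomial.derivative (powSumNumerator N) +
      Polynomial.C ((N : R) + 1) * powSumNumerator N)

variable {R}

theorem mk_natCast_mul (c : ℕ → R) : mk (fun t => (t : R) * c t) = X * d⁄dX R (mk c) := by
  ext (_ | k)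
  · simp
  · rw [coeff_succ_X_mul, coeff_derivative, coeff_mk, coeff_mk]
    push_cast
    ring

theorem coe_powSumNumerator (N : ℕ) :
    (powSumNumerator R N : R⟦X⟧) = (1 - X) ^ (N + 1) * mk fun t => (t : R) ^ N := by
  induction N with
  | zero =>
    simp only [powSumNumerator, Polynomial.coe_one, zero_add, pow_one, pow_zero]
    rw [mul_comm]
    exact (mk_one_mul_one_sub_eq_one R).symm
  | succ N ih =>
    have hD := congrArg (d⁄dX R) ih
    rw [derivative_coe, Derivation.leibniz, Derivation.leibniz_pow, map_sub,
      Derivation.map_one_eq_zero, derivative_X] at hD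
    have hmk : (mk fun t => (t : R) ^ (N + 1)) = X * d⁄dX R (mk fun t => (t : R) ^ N) := by
      rw [← mk_natCast_mul]
      simp only [pow_succ']
    simp only [powSumNumerator, Polynomial.coe_mul, Polynomial.coe_add, Polynomial.coe_sub,
      Polynomial.coe_one, Polynomial.coe_X, Polynomial.coe_C, hD, ih, hmk]
    simp only [map_add, map_natCast, map_one, smul_eq_mul, nsmul_eq_mul, Nat.add_sub_cancel]
    push_cast
    ring

theorem X_pow_add_two_dvd_natCast_mul_sub_X_mul_derivative {N : ℕ} {g : R⟦X⟧}
    (h : X ^ (N + 1) ∣ g) : X ^ (N + 2) ∣ ((N + 1 : ℕ) : R⟦X⟧) * g - X * d⁄dX R g := by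
  obtain ⟨q, rfl⟩ := h
  refine ⟨-d⁄dX R q, ?_⟩
  rw [Derivation.leibniz, Derivation.leibniz_pow, derivative_X, smul_eq_mul, nsmul_eq_mul,
    smul_eq_mul, Nat.add_sub_cancel]
  ring

variable {A : Type*} [CommRing A] [Algebra ℚ A]

theorem bernoulliNeg_pow_mul_aeval_powSumNumerator_succ (N : ℕ) :
    bernoulliNeg A ^ (N + 2) * Polynomial.aeval (expNeg A) (powSumNumerator A (N + 1)) =
      ((N + 1 : ℕ) : A⟦X⟧) *
          (bernoulliNeg A ^ (N + 1) * Polynomial.aeval (expNeg A) (powSumNumerator A N)) -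
        X * d⁄dX A
          (bernoulliNeg A ^ (N + 1) * Polynomial.aeval (expNeg A) (powSumNumerator A N)) := by
  set Ω := powSumNumerator A N
  have hΩ : Polynomial.aeval (expNeg A) (powSumNumerator A (N + 1)) = expNeg A *
      ((1 - expNeg A) * Polynomial.aeval (expNeg A) (Polynomial.derivative Ω) +
        ((N : A⟦X⟧) + 1) * Polynomial.aeval (expNeg A) Ω) := by
    simp only [powSumNumerator, map_add, map_natCast, map_one, map_mul, Polynomial.aeval_X,
      Polynomial.aeval_sub, Ω]
  rw [hΩ, Derivation.leibniz, Derivation.leibniz_pow, Derivation.map_aeval, derivative_expNeg,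
    Nat.add_sub_cancel]
  simp only [smul_eq_mul, nsmul_eq_mul]
  push_cast
  linear_combination
    (bernoulliNeg A ^ (N + 1) * Polynomial.aeval (expNeg A) (Polynomial.derivative Ω) *
        expNeg A) * bernoulliNeg_mul_one_sub_expNeg (A := A) +
      ((N : A⟦X⟧) + 1) * Polynomial.aeval (expNeg A) Ω * bernoulliNeg A ^ N *
        X_mul_derivative_bernoulliNeg (A := A)

theorem X_pow_dvd_bernoulliNeg_pow_mul_aeval_powSumNumerator_sub (N : ℕ) :
    X ^ (N + 1) ∣ bernoulliNeg A ^ (N + 1) * Polynomial.aeval (expNeg A) (powSumNumerator A N) -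
      C (N ! : A) := by
  induction N with
  | zero =>
    rw [zero_add, pow_one, PowerSeries.X_dvd_iff]
    simp [powSumNumerator, bernoulliNeg, ← coeff_zero_eq_constantCoeff, bernoulliPowerSeries]
  | succ N ih =>
    rw [bernoulliNeg_pow_mul_aeval_powSumNumerator_succ]
    convert X_pow_add_two_dvd_natCast_mul_sub_X_mul_derivative ih using 1
    rw [map_sub, derivative_C, Nat.factorial_succ]
    push_cast
    simp only [map_mul, map_add, map_natCast, map_one]
    ring

theorem coeff_bernoulliNeg_pow_mul_aeval_powSumNumerator {N i : ℕ} (hi : i ≤ N) :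
    coeff i (bernoulliNeg A ^ (N + 1) * Polynomial.aeval (expNeg A) (powSumNumerator A N)) =
      if i = 0 then (N ! : A) else 0 := by
  have h := X_pow_dvd_iff.1 (X_pow_dvd_bernoulliNeg_pow_mul_aeval_powSumNumerator_sub (A := A) N)
    i (Nat.lt_succ_of_le hi)
  rwa [map_sub, coeff_C, sub_eq_zero] at h

end PowerSums

section EvalSums

noncomputable def evalSumNumerator {R : Type*} [CommRing R] (P : R[X]) (d : ℕ) : R[X] :=
  ∑ N ∈ Finset.range (d + 1),
    Polynomial.C (P.coeff N) * (1 - Polynomial.X) ^ (d - N) * powSumNumerator R N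

theorem coe_evalSumNumerator {R : Type*} [CommRing R] {P : R[X]} {d : ℕ}
    (hP : P.natDegree ≤ d) :
    (evalSumNumerator P d : R⟦X⟧) = (1 - X) ^ (d + 1) * mk fun t => P.eval (t : R) := by
  have hmk : (mk fun t => P.eval (t : R)) =
      ∑ N ∈ Finset.range (d + 1), C (P.coeff N) * mk fun t => (t : R) ^ N := by
    ext t
    simp [map_sum, Polynomial.eval_eq_sum_range' (Nat.lt_succ_of_le hP), mul_comm]
  rw [hmk, Finset.mul_sum, evalSumNumerator, ← Polynomial.coeToPowerSeries.ringHom_apply, map_sum]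
  refine Finset.sum_congr rfl fun N hN => ?_
  have hd : d + 1 = (d - N) + (N + 1) := by have := Finset.mem_range.1 hN; omega
  simp only [Polynomial.coeToPowerSeries.ringHom_apply, Polynomial.coe_mul, Polynomial.coe_pow,
    Polynomial.coe_sub, Polynomial.coe_one, Polynomial.coe_X, Polynomial.coe_C,
    coe_powSumNumerator, hd, pow_add]
  ring

theorem coeff_bernoulliNeg_pow_mul_aeval_evalSumNumerator {A : Type*} [CommRing A] [Algebra ℚ A]
    (P : A[X]) {d j : ℕ} (hj : j ≤ d) :
    coeff j (bernoulliNeg A ^ (d + 1) * Polynomial.aeval (expNeg A) (evalSumNumerator P d)) =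
      (d - j)! * P.coeff (d - j) := by
  set e := fun N => bernoulliNeg A ^ (N + 1) * Polynomial.aeval (expNeg A) (powSumNumerator A N)
  have hsplit : bernoulliNeg A ^ (d + 1) * Polynomial.aeval (expNeg A) (evalSumNumerator P d) =
      ∑ N ∈ Finset.range (d + 1), C (P.coeff N) * (X ^ (d - N) * e N) := by
    rw [evalSumNumerator, map_sum, Finset.mul_sum]
    refine Finset.sum_congr rfl fun N hN => ?_
    have hd : d + 1 = (d - N) + (N + 1) := by have := Finset.mem_range.1 hN; omega
    simp only [e, map_mul, map_pow, map_sub, map_one, Polynomial.aeval_C, Polynomial.aeval_X,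
      ← bernoulliNeg_mul_one_sub_expNeg, mul_pow, hd, pow_add, algebraMap_eq]
    ring
  have hterm : ∀ N ∈ Finset.range (d + 1), coeff j (C (P.coeff N) * (X ^ (d - N) * e N)) =
      if d - j = N then (d - j)! * P.coeff (d - j) else 0 := by
    intro N hN
    have hN := Finset.mem_range.1 hN
    rw [coeff_C_mul, coeff_X_pow_mul']
    split_ifs with h1 h2 h2
    · rw [coeff_bernoulliNeg_pow_mul_aeval_powSumNumerator (by omega), if_pos (by omega), h2]
      ring
    · rw [coeff_bernoulliNeg_pow_mul_aeval_powSumNumerator (by omega), if_neg (by omega),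
        mul_zero]
    · omega
    · rw [mul_zero]
  rw [hsplit, map_sum, Finset.sum_congr rfl hterm, Finset.sum_ite_eq, if_pos]
  exact Finset.mem_range.2 (by omega)

end EvalSums

section GeneratingFunction

open Finset

variable {n : ℕ} {a : Fin n → ℕ}

theorem restrictedPartition_eq_card (ha : ∀ i, 0 < a i) (t : ℕ) :
    restrictedPartition n a t = #{l ∈ finsuppAntidiag univ t | ∀ i, a i ∣ l i} := by
  rw [restrictedPartition, ← Nat.card_eq_finsetCard]
  refine Nat.card_congr
    { toFun := fun m => ⟨Finsupp.equivFunOnFinite.symm fun i => m.1 i * a i, ?_⟩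
      invFun := fun l => ⟨fun i => l.1 i / a i, ?_⟩
      left_inv := fun m => ?_
      right_inv := fun l => ?_ }
  · simp [mem_finsuppAntidiag, ← m.2]
  · have hl := mem_filter.1 l.2
    rw [mem_finsuppAntidiag] at hl
    calc ∑ i, l.1 i / a i * a i = ∑ i, l.1 i :=
          sum_congr rfl fun i _ => Nat.div_mul_cancel (hl.2 i)
      _ = t := hl.1.1
  · ext i
    simp [Nat.mul_div_cancel _ (ha i)]
  · obtain ⟨l, hl⟩ := l
    ext i
    simp [Nat.div_mul_cancel ((mem_filter.1 hl).2 i)]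

variable {R : Type*} [CommRing R]

theorem mk_restrictedPartition (ha : ∀ i, 0 < a i) :
    (mk fun t => (restrictedPartition n a t : R)) = ∏ i, expand (a i) (ha i).ne' (mk 1) := by
  ext t
  simp [coeff_prod, coeff_expand, restrictedPartition_eq_card ha, prod_boole, sum_boole]

theorem prod_one_sub_X_pow_mul_mk_restrictedPartition (ha : ∀ i, 0 < a i) :
    (∏ i, (1 - X ^ a i)) * (mk fun t => (restrictedPartition n a t : R)) = 1 := by
  rw [mk_restrictedPartition ha, ← prod_mul_distrib]
  refine prod_eq_one fun i _ => ?_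
  rw [← expand_X (a i) (ha i).ne', ← map_one (expand (a i) (ha i).ne'), ← map_sub, ← map_mul,
    mul_comm, mk_one_mul_one_sub_eq_one, map_one]

theorem coe_prod_one_sub_X_pow (a : Fin n → ℕ) :
    ((∏ i, (1 - Polynomial.X ^ a i : R[X]) : R[X]) : R⟦X⟧) = ∏ i, (1 - X ^ a i) := by
  rw [← Polynomial.coeToPowerSeries.ringHom_apply, map_prod]
  simp [Polynomial.coeToPowerSeries.ringHom_apply]

end GeneratingFunction

section RegularAtOne

variable {K : Type*} [Field K]

def IsRegularRatAtOne (f : K⟦X⟧) : Prop :=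
  ∃ D U : K[X], D.eval 1 ≠ 0 ∧ (D : K⟦X⟧) * f = U

theorem isRegularRatAtOne_zero : IsRegularRatAtOne (0 : K⟦X⟧) :=
  ⟨1, 0, by simp, by simp⟩

theorem IsRegularRatAtOne.add {f g : K⟦X⟧} (hf : IsRegularRatAtOne f)
    (hg : IsRegularRatAtOne g) : IsRegularRatAtOne (f + g) := by
  obtain ⟨D, U, hD, hf⟩ := hf
  obtain ⟨D', U', hD', hg⟩ := hg
  refine ⟨D * D', D' * U + D * U', by simp [hD, hD'], ?_⟩
  push_cast [← hf, ← hg]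
  ring

theorem isRegularRatAtOne_sum {ι : Type*} (s : Finset ι) {f : ι → K⟦X⟧}
    (h : ∀ i ∈ s, IsRegularRatAtOne (f i)) : IsRegularRatAtOne (∑ i ∈ s, f i) :=
  Finset.sum_induction f IsRegularRatAtOne (fun _ _ => IsRegularRatAtOne.add)
    isRegularRatAtOne_zero h

theorem coe_comp_C_mul_X {R : Type*} [CommRing R] (p : R[X]) (r : R) :
    ((p.comp (Polynomial.C r * Polynomial.X) : R[X]) : R⟦X⟧) = rescale r (p : R⟦X⟧) := by
  ext n
  rw [coeff_rescale, Polynomial.coeff_coe, Polynomial.coeff_coe, Polynomial.comp_C_mul_X_coeff,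
    mul_comm]

theorem isRegularRatAtOne_mk_eval_mul_pow (P : K[X]) {μ : K} (hμ : μ ≠ 1) :
    IsRegularRatAtOne (mk fun t => P.eval (t : K) * μ ^ t) := by
  refine ⟨((1 - Polynomial.X : K[X]) ^ (P.natDegree + 1)).comp (Polynomial.C μ * Polynomial.X),
    (evalSumNumerator P P.natDegree).comp (Polynomial.C μ * Polynomial.X), ?_, ?_⟩
  · simp [sub_ne_zero, hμ.symm]
  · rw [coe_comp_C_mul_X, coe_comp_C_mul_X, coe_evalSumNumerator le_rfl, map_mul, rescale_mk]
    simp only [Polynomial.coe_pow, Polynomial.coe_sub, Polynomial.coe_one, Polynomial.coe_X,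
      mul_comm]

theorem exists_isRegularRatAtOne_mk_finsum_eq_add (P : K → K[X]) {T : Finset K}
    (hT : ∀ μ, P μ ≠ 0 → μ ∈ T) : ∃ Q : K⟦X⟧, IsRegularRatAtOne Q ∧
      (mk fun t => ∑ᶠ μ, (P μ).eval (t : K) * μ ^ t) = (mk fun t => (P 1).eval (t : K)) + Q := by
  classical
  refine ⟨∑ μ ∈ T.erase 1, mk fun t => (P μ).eval (t : K) * μ ^ t,
    isRegularRatAtOne_sum _ fun μ hμ => isRegularRatAtOne_mk_eval_mul_pow (P μ)
      (Finset.ne_of_mem_erase hμ), ?_⟩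
  ext t
  have hsupp : (Function.support fun μ => (P μ).eval (t : K) * μ ^ t) ⊆ ↑(insert 1 T) :=
    fun μ hμ => Finset.mem_insert_of_mem (hT μ fun h0 => hμ (by simp [h0]))
  rw [coeff_mk, finsum_eq_sum_of_support_subset _ hsupp, ← Finset.add_sum_erase _ _
    (Finset.mem_insert_self 1 T), Finset.erase_insert_eq_erase, map_add, map_sum]
  simp

theorem isUnit_aeval_of_eval_ne_zero {f : K⟦X⟧} {D : K[X]}
    (hD : D.eval (constantCoeff f) ≠ 0) : IsUnit (Polynomial.aeval f D) := by
  rw [isUnit_iff_constantCoeff, Polynomial.aeval_def, Polynomial.hom_eval₂]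
  exact hD.isUnit

end RegularAtOne

section PrincipalPart

open Finset

variable {K : Type*} [Field K] {n : ℕ} {a : Fin n → ℕ}

theorem mul_one_sub_X_pow_eq_of_mul_eq_one {A D U : K[X]} {F Q : K⟦X⟧} {P : K[X]} {d : ℕ}
    (hA : (A : K⟦X⟧) * F = 1) (hF : F = (mk fun t => P.eval (t : K)) + Q)
    (hDQ : (D : K⟦X⟧) * Q = U) (hP : P.natDegree ≤ d) :
    D * (1 - Polynomial.X) ^ (d + 1) =
      A * (D * evalSumNumerator P d + (1 - Polynomial.X) ^ (d + 1) * U) := by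
  apply Polynomial.coe_inj.1
  push_cast [coe_evalSumNumerator hP, ← hDQ]
  linear_combination (-(D : K⟦X⟧) * (1 - X) ^ (d + 1)) * hA +
    ((D : K⟦X⟧) * (1 - X) ^ (d + 1) * A) * hF

variable [CharZero K]

theorem aeval_expNeg_prod_one_sub_X_pow_mul (a : Fin n → ℕ) :
    Polynomial.aeval (expNeg K) (∏ i, (1 - Polynomial.X ^ a i : K[X])) *
        ∏ i, rescale (a i : K) (bernoulliNeg K) = C (∏ i, (a i : K)) * X ^ n := by
  rw [map_prod, ← prod_mul_distrib]
  simp only [map_sub, map_one, map_pow, Polynomial.aeval_X,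
    one_sub_expNeg_pow_mul_rescale_bernoulliNeg]
  rw [prod_mul_distrib, prod_const, card_univ, Fintype.card_fin, map_prod]

theorem X_pow_dvd_of_mk_restrictedPartition_eq (ha : ∀ i, 0 < a i) {P : K[X]} {Q : K⟦X⟧}
    (hQ : IsRegularRatAtOne Q)
    (h : (mk fun t => (restrictedPartition n a t : K)) = (mk fun t => P.eval (t : K)) + Q)
    {d : ℕ} (hP : P.natDegree ≤ d) (hnd : n ≤ d + 1) :
    X ^ (d + 1) ∣ X ^ (d + 1 - n) * ∏ i, rescale (a i : K) (bernoulliNeg K) -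
      C (∏ i, (a i : K)) * (bernoulliNeg K ^ (d + 1) *
        Polynomial.aeval (expNeg K) (evalSumNumerator P d)) := by
  obtain ⟨D, U, hD, hDQ⟩ := hQ
  have hid := congrArg (Polynomial.aeval (expNeg K)) (mul_one_sub_X_pow_eq_of_mul_eq_one
    (by rw [coe_prod_one_sub_X_pow]; exact prod_one_sub_X_pow_mul_mk_restrictedPartition ha)
    h hDQ hP)
  simp only [map_mul, map_add, map_pow, map_sub, map_one, Polynomial.aeval_X] at hid
  have hA := aeval_expNeg_prod_one_sub_X_pow_mul (K := K) a
  have hX : X ^ (d + 1) = bernoulliNeg K ^ (d + 1) * (1 - expNeg K) ^ (d + 1) := by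
    rw [← mul_pow, bernoulliNeg_mul_one_sub_expNeg]
  have hpow : X ^ (d + 1 - n) * X ^ n = bernoulliNeg K ^ (d + 1) * (1 - expNeg K) ^ (d + 1) := by
    rw [← pow_add, Nat.sub_add_cancel hnd, hX]
  have hunit : IsUnit (Polynomial.aeval (expNeg K) D) :=
    isUnit_aeval_of_eval_ne_zero (by rwa [constantCoeff_expNeg])
  -- multiply the evaluated identity by `B(-z)^{d+1} ∏ᵢ B(-aᵢz)`, then cancel `zⁿ` and `D(e^{-z})`
  refine hunit.dvd_mul_left.1 ⟨C (∏ i, (a i : K)) * Polynomial.aeval (expNeg K) U, ?_⟩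
  refine mul_right_cancel₀ (pow_ne_zero n (X_ne_zero (R := K))) ?_
  set ev := Polynomial.aeval (R := K) (expNeg K)
  linear_combination (ev D * ∏ i, rescale (a i : K) (bernoulliNeg K)) * hpow -
    (C (∏ i, (a i : K)) * ev U * X ^ n) * hX +
    (bernoulliNeg K ^ (d + 1) * ∏ i, rescale (a i : K) (bernoulliNeg K)) * hid +
    (bernoulliNeg K ^ (d + 1) *
      (ev D * ev (evalSumNumerator P d) + (1 - expNeg K) ^ (d + 1) * ev U)) * hA

theorem coeff_prod_rescale_bernoulliNeg_of_mk_restrictedPartition_eq (ha : ∀ i, 0 < a i)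
    {P : K[X]} {Q : K⟦X⟧} (hQ : IsRegularRatAtOne Q)
    (h : (mk fun t => (restrictedPartition n a t : K)) = (mk fun t => P.eval (t : K)) + Q)
    {m : ℕ} (hm : m < n) :
    coeff m (∏ i, rescale (a i : K) (bernoulliNeg K)) =
      (∏ i, (a i : K)) * ((n - 1 - m)! * P.coeff (n - 1 - m)) := by
  set d := n + P.natDegree
  have hcoeff := X_pow_dvd_iff.1 (X_pow_dvd_of_mk_restrictedPartition_eq ha hQ h
    (d := d) (by omega) (by omega)) (d + 1 - n + m) (by omega)
  rwa [map_sub, coeff_X_pow_mul', if_pos (by omega), Nat.add_sub_cancel_left, coeff_C_mul,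
    coeff_bernoulliNeg_pow_mul_aeval_evalSumNumerator _ (by omega), sub_eq_zero,
    show d - (d + 1 - n + m) = n - 1 - m by omega] at hcoeff

end PrincipalPart

theorem bernoulliPS_eq_bernoulliPowerSeries : bernoulliPS = bernoulliPowerSeries ℂ := by
  ext k
  simp [bernoulliPS, bernoulliPowerSeries]

theorem prod_rescale_bernoulliNeg_eq_rescale_neg_one {n : ℕ} (a : Fin n → ℕ) :
    ∏ i, rescale (a i : ℂ) (bernoulliNeg ℂ) =
      rescale (-1) (∏ i, rescale (a i : ℂ) bernoulliPS) := by
  simp only [map_prod, bernoulliNeg, rescale_rescale, bernoulliPS_eq_bernoulliPowerSeries, mul_comm]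

end RestrictedPartition

open RestrictedPartition

/-- The coefficient of `t^{n-1-m}` in the polynomial part `P_A(t)` equals
`(-1)^m / ((n-1-m)! a_1⋯a_n)` times the coefficient of `z^m` in `B(a_1 z) ⋯ B(a_n z)`. -/
theorem polynomialPart_coeff_eq (n : ℕ) (hn : 0 < n) (a : Fin n → ℕ) (ha : ∀ i, 0 < a i)
    (m : ℕ) (hm : m ≤ n - 1)
    (P : ℂ → Polynomial ℂ)
    (hsupp : ∀ μ : ℂ, P μ ≠ 0 → ∃ i, μ ^ (a i) = 1)
    (hdecomp : ∀ t : ℕ, (restrictedPartition n a t : ℂ) =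
      ∑ᶠ μ : ℂ, (P μ).eval (t : ℂ) * μ ^ t) :
    (P 1).coeff (n - 1 - m) =
      (-1) ^ m / ((n - 1 - m).factorial * ∏ i, (a i : ℂ)) *
        PowerSeries.coeff (R := ℂ) m (∏ i, PowerSeries.rescale ((a i : ℂ)) bernoulliPS) := by
  obtain ⟨Q, hQ, hsplit⟩ := exists_isRegularRatAtOne_mk_finsum_eq_add P
    (T := Finset.univ.biUnion fun i => Polynomial.nthRootsFinset (a i) (1 : ℂ)) fun μ hμ => by
      obtain ⟨i, hi⟩ := hsupp μ hμ
      exact Finset.mem_biUnion.2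
        ⟨i, Finset.mem_univ i, (Polynomial.mem_nthRootsFinset (ha i) 1).2 hi⟩
  have hcoeff := coeff_prod_rescale_bernoulliNeg_of_mk_restrictedPartition_eq ha hQ
    (by rw [← hsplit]; simp only [hdecomp]) (m := m) (by omega)
  rw [prod_rescale_bernoulliNeg_eq_rescale_neg_one, coeff_rescale] at hcoeff
  have hne : ((n - 1 - m)! : ℂ) * ∏ i, (a i : ℂ) ≠ 0 :=
    mul_ne_zero (Nat.cast_ne_zero.2 (Nat.factorial_ne_zero _))
      (Finset.prod_ne_zero_iff.2 fun i _ => Nat.cast_ne_zero.2 (ha i).ne')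
  rw [div_mul_eq_mul_div, eq_div_iff hne]
  linear_combination -hcoeff
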